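/- Let p ≥ 2, K > 0, and let (X, ‖·‖) be a Banach space satisfying the p-convexity inequality with constant K. Let π be an action of ℍ on X by linear isometric automorphisms and let f : ℍ → X be a 1-Lipschitz 1-cocycle for π. Then for every ℓ, k, m ∈ ℕ there exist integers i ∈ [k+1, k+m] and j ∈ [0, 2^ℓ − 1] such that for all n ∈ ℕ: ‖π(c^{−j·2^{iℓ}}) P_{(i+1)ℓ} f(c^{n²}) − P_{iℓ} f(c^{n²})‖ ≤ 16·K·n / m^{1/p}. -/

import Mathlib

open scoped BigOperators

/-- The discrete Heisenberg group `ℍ`, realized via the coordinates of the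
3×3 upper-triangular integer matrices `[[1, x, z], [0, 1, y], [0, 0, 1]]`
with unit diagonal. -/
@[ext] structure Heis where
  x : ℤ
  y : ℤ
  z : ℤ

namespace Heis

instance : One Heis := ⟨⟨0, 0, 0⟩⟩
instance : Mul Heis := ⟨fun g h => ⟨g.x + h.x, g.y + h.y, g.z + h.z + g.x * h.y⟩⟩
instance : Inv Heis := ⟨fun g => ⟨-g.x, -g.y, -g.z + g.x * g.y⟩⟩

@[simp] lemma mul_def (g h : Heis) :
    g * h = ⟨g.x + h.x, g.y + h.y, g.z + h.z + g.x * h.y⟩ := rfl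
@[simp] lemma one_def : (1 : Heis) = ⟨0, 0, 0⟩ := rfl
@[simp] lemma inv_def (g : Heis) : g⁻¹ = ⟨-g.x, -g.y, -g.z + g.x * g.y⟩ := rfl

instance : Group Heis where
  mul_assoc g h k := by ext <;> simp <;> ring
  one_mul g := by ext <;> simp
  mul_one g := by ext <;> simp
  inv_mul_cancel g := by ext <;> simp <;> ring

/-- The generator `a`. -/
def A : Heis := ⟨1, 0, 0⟩
/-- The generator `b`. -/
def B : Heis := ⟨0, 1, 0⟩
/-- The commutator `c = a * b * a⁻¹ * b⁻¹`, a central element. -/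
def C : Heis := A * B * A⁻¹ * B⁻¹
/-- The symmetric generating set `S = {a, b, a⁻¹, b⁻¹}`. -/
def S : Set Heis := {A, B, A⁻¹, B⁻¹}

/-- The word length of `g` with respect to the generating set `S`. -/
noncomputable def wordLength (g : Heis) : ℕ :=
  sInf {n : ℕ | ∃ l : List Heis, l.length = n ∧ (∀ s ∈ l, s ∈ S) ∧ l.prod = g}

/-- The left-invariant word metric `d_W` on `ℍ` associated to `S`. -/
noncomputable def dW (g h : Heis) : ℕ := wordLength (g⁻¹ * h)

end Heis

/-- A Banach space `(X, ‖·‖)` satisfies the `p`-convexity inequality with constant `K`: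
`‖(x+y)/2‖^p ≤ (‖x‖^p + ‖y‖^p)/2 − K^{−p}·‖(x−y)/2‖^p` for all `x, y ∈ X`. -/
def PConvex (X : Type*) [NormedAddCommGroup X] [NormedSpace ℝ X] (p K : ℝ) : Prop :=
  ∀ v w : X, ‖(2:ℝ)⁻¹ • (v + w)‖ ^ p ≤
    (‖v‖ ^ p + ‖w‖ ^ p) / 2 - K ^ (-p) * ‖(2:ℝ)⁻¹ • (v - w)‖ ^ p

/-- The averaging operator `P_n = 2^{−n}·∑_{j<2^n} π(c)^j` associated to an action `π` of
`ℍ` by linear isometric automorphisms, where `c = aba⁻¹b⁻¹`. -/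
noncomputable def Pop {X : Type*} [NormedAddCommGroup X] [NormedSpace ℝ X]
    (π : Heis →* (X ≃ₗᵢ[ℝ] X)) (n : ℕ) (v : X) : X :=
  ((2 : ℝ) ^ n)⁻¹ • ∑ j ∈ Finset.range (2 ^ n), (π Heis.C ^ j) v

/-!
For fixed `ℓ` and `i`, the vectors `π(c^{j·2^{iℓ}}) P_{iℓ} v`, `j < 2^ℓ`, all have norm
`‖P_{iℓ} v‖` and their mean is `P_{(i+1)ℓ} v`. By `p`-convexity, their average `p`-th power
deviation from the mean is at most `(2K)^p/2 · (‖P_{iℓ} v‖^p - ‖P_{(i+1)ℓ} v‖^p)`, which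
telescopes over `i`. Applied to `v = f(a)` and `v = f(b)` and pigeonholed over the `m·2^ℓ`
pairs `(i, j)`, this gives a pair for which `D = π(c^{-j·2^{iℓ}}) P_{(i+1)ℓ} - P_{iℓ}` maps
`f(a)` and `f(b)` to vectors of norm at most `2K/m^{1/p}`. As `c` is central, `D ∘ f` is again
a cocycle, and `c^{n²} = [a^n, b^n]` gives `‖D f(c^{n²})‖ ≤ 2n‖D f(a)‖ + 2n‖D f(b)‖`.
-/

open Finset

theorem Finset.sum_range_mul {M : Type*} [AddCommMonoid M] (f : ℕ → M) (a b : ℕ) :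
    ∑ q ∈ range (a * b), f q = ∑ j ∈ range a, ∑ r ∈ range b, f (j * b + r) := by
  induction a with
  | zero => simp
  | succ a ih => rw [sum_range_succ, ← ih, Nat.succ_mul, sum_range_add]

theorem le_div_rpow_one_div_of_rpow_le {a b c p : ℝ} (ha : 0 ≤ a) (hb : 0 ≤ b) (hc : 0 < c)
    (hp : 0 < p) (h : a ^ p ≤ b ^ p / c) : a ≤ b / c ^ (1 / p) := by
  rwa [← Real.rpow_le_rpow_iff ha (by positivity) hp, Real.div_rpow hb (by positivity),
    ← Real.rpow_mul hc.le, one_div_mul_cancel hp.ne', Real.rpow_one]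

section PConvexity

variable {ι X : Type*} [NormedAddCommGroup X] [NormedSpace ℝ X]

theorem norm_inv_card_smul_sum_rpow_le {p : ℝ} (hp : 1 ≤ p) {s : Finset ι} (hs : s.Nonempty)
    (v : ι → X) : ‖(#s : ℝ)⁻¹ • ∑ i ∈ s, v i‖ ^ p ≤ (#s : ℝ)⁻¹ * ∑ i ∈ s, ‖v i‖ ^ p := by
  have hcard : (0 : ℝ) < #s := by exact_mod_cast hs.card_pos
  have hweights : ∑ _i ∈ s, (#s : ℝ)⁻¹ = 1 := by
    rw [sum_const, nsmul_eq_mul, mul_inv_cancel₀ hcard.ne']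
  calc ‖(#s : ℝ)⁻¹ • ∑ i ∈ s, v i‖ ^ p ≤ (∑ i ∈ s, (#s : ℝ)⁻¹ * ‖v i‖) ^ p := by
        rw [norm_smul, Real.norm_of_nonneg (by positivity), ← mul_sum]
        gcongr
        exact norm_sum_le _ _
    _ ≤ ∑ i ∈ s, (#s : ℝ)⁻¹ * ‖v i‖ ^ p :=
        Real.rpow_arith_mean_le_arith_mean_rpow s _ _ (fun _ _ => by positivity) hweights
          (fun _ _ => norm_nonneg _) hp
    _ = (#s : ℝ)⁻¹ * ∑ i ∈ s, ‖v i‖ ^ p := by rw [mul_sum]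

theorem PConvex.norm_sub_rpow_le {p K : ℝ} (hX : PConvex X p K) (hK : 0 < K) (v w : X) :
    ‖v - w‖ ^ p ≤ (2 * K) ^ p * ((‖v‖ ^ p + ‖w‖ ^ p) / 2 - ‖(2 : ℝ)⁻¹ • (v + w)‖ ^ p) := by
  have hhalf : ‖v - w‖ ^ p = 2 ^ p * ‖(2 : ℝ)⁻¹ • (v - w)‖ ^ p := by
    rw [norm_smul, Real.mul_rpow (by positivity) (norm_nonneg _), ← mul_assoc,
      Real.norm_of_nonneg (by positivity), ← Real.mul_rpow (by positivity) (by positivity)]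
    norm_num
  have hKp : K ^ p * K ^ (-p) = 1 := by
    rw [Real.rpow_neg hK.le, mul_inv_cancel₀ (Real.rpow_pos_of_pos hK p).ne']
  rw [Real.mul_rpow (by positivity) hK.le, hhalf]
  calc 2 ^ p * ‖(2 : ℝ)⁻¹ • (v - w)‖ ^ p
      = 2 ^ p * K ^ p * (K ^ (-p) * ‖(2 : ℝ)⁻¹ • (v - w)‖ ^ p) := by
        rw [mul_assoc (2 ^ p), ← mul_assoc (K ^ p), hKp, one_mul]
    _ ≤ 2 ^ p * K ^ p * ((‖v‖ ^ p + ‖w‖ ^ p) / 2 - ‖(2 : ℝ)⁻¹ • (v + w)‖ ^ p) := by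
        gcongr
        linarith [hX v w]

theorem PConvex.inv_card_mul_sum_norm_sub_rpow_le {p K : ℝ} (hX : PConvex X p K) (hp : 1 ≤ p)
    (hK : 0 < K) {s : Finset ι} (hs : s.Nonempty) (w : ι → X) {w₀ : X}
    (hw₀ : (#s : ℝ)⁻¹ • ∑ j ∈ s, w j = w₀) :
    (#s : ℝ)⁻¹ * ∑ j ∈ s, ‖w j - w₀‖ ^ p ≤
      (2 * K) ^ p / 2 * ((#s : ℝ)⁻¹ * ∑ j ∈ s, ‖w j‖ ^ p - ‖w₀‖ ^ p) := by
  have hcard : (#s : ℝ) ≠ 0 := by exact_mod_cast hs.card_pos.ne'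
  have hmid : (#s : ℝ)⁻¹ • ∑ j ∈ s, (2 : ℝ)⁻¹ • (w j + w₀) = w₀ := by
    rw [← smul_sum, sum_add_distrib, sum_const, smul_comm, smul_add, hw₀,
      ← Nat.cast_smul_eq_nsmul ℝ, inv_smul_smul₀ hcard]
    module
  -- `p`-convexity for each pair `(w j, w₀)`, then Jensen for their midpoints, whose mean is `w₀`
  have hjensen := norm_inv_card_smul_sum_rpow_le hp hs fun j => (2 : ℝ)⁻¹ • (w j + w₀)
  rw [hmid] at hjensen
  calc (#s : ℝ)⁻¹ * ∑ j ∈ s, ‖w j - w₀‖ ^ p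
      ≤ (#s : ℝ)⁻¹ * ∑ j ∈ s,
          (2 * K) ^ p * ((‖w j‖ ^ p + ‖w₀‖ ^ p) / 2 - ‖(2 : ℝ)⁻¹ • (w j + w₀)‖ ^ p) := by
        gcongr with j
        exact hX.norm_sub_rpow_le hK _ _
    _ = (2 * K) ^ p / 2 * ((#s : ℝ)⁻¹ * ∑ j ∈ s, ‖w j‖ ^ p + ‖w₀‖ ^ p
          - 2 * ((#s : ℝ)⁻¹ * ∑ j ∈ s, ‖(2 : ℝ)⁻¹ • (w j + w₀)‖ ^ p)) := by
        rw [← mul_sum, sum_sub_distrib, ← sum_div, sum_add_distrib, sum_const, nsmul_eq_mul]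
        field_simp
    _ ≤ (2 * K) ^ p / 2 * ((#s : ℝ)⁻¹ * ∑ j ∈ s, ‖w j‖ ^ p - ‖w₀‖ ^ p) :=
        mul_le_mul_of_nonneg_left (by linarith) (by positivity)

end PConvexity

def IsCocycle {G X : Type*} [Group G] [NormedAddCommGroup X] [NormedSpace ℝ X]
    (π : G →* (X ≃ₗᵢ[ℝ] X)) (f : G → X) : Prop :=
  ∀ g h : G, f (g * h) = π g (f h) + f g

section IsometricAction

variable {G X : Type*} [Group G] [NormedAddCommGroup X] [NormedSpace ℝ X]
  (π : G →* (X ≃ₗᵢ[ℝ] X))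

theorem apply_comm_of_mem_center {x : G} (hx : x ∈ Subgroup.center G) (g : G) (v : X) :
    π x (π g v) = π g (π x v) := by
  rw [← Function.comp_apply (f := π x), ← LinearIsometryEquiv.coe_mul, ← map_mul,
    (Subgroup.mem_center_iff.mp hx g).symm, map_mul, LinearIsometryEquiv.coe_mul,
    Function.comp_apply]

theorem norm_apply_sub_eq (x : G) (u w : X) : ‖π x u - w‖ = ‖π x⁻¹ w - u‖ := by
  rw [map_inv, LinearIsometryEquiv.coe_inv, ← LinearIsometryEquiv.norm_map (π x).symm, map_sub,
    LinearIsometryEquiv.symm_apply_apply, norm_sub_rev]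

end IsometricAction

namespace IsCocycle

variable {G X : Type*} [Group G] [NormedAddCommGroup X] [NormedSpace ℝ X]
  {π : G →* (X ≃ₗᵢ[ℝ] X)} {f : G → X}

theorem map_one (hf : IsCocycle π f) : f 1 = 0 := by
  simpa using hf 1 1

theorem norm_map_mul_le (hf : IsCocycle π f) (g h : G) : ‖f (g * h)‖ ≤ ‖f g‖ + ‖f h‖ := by
  rw [hf, add_comm ‖f g‖, ← LinearIsometryEquiv.norm_map (π g) (f h)]
  exact norm_add_le _ _

theorem norm_map_inv (hf : IsCocycle π f) (g : G) : ‖f g⁻¹‖ = ‖f g‖ := by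
  have h := hf g⁻¹ g
  rw [inv_mul_cancel, hf.map_one, eq_comm, add_eq_zero_iff_eq_neg] at h
  rw [← norm_neg, ← h, LinearIsometryEquiv.norm_map]

theorem norm_map_pow_le (hf : IsCocycle π f) (g : G) (n : ℕ) : ‖f (g ^ n)‖ ≤ n * ‖f g‖ := by
  induction n with
  | zero => simp [hf.map_one]
  | succ n ih =>
    rw [pow_succ, Nat.cast_succ, add_one_mul]
    exact (hf.norm_map_mul_le _ _).trans (by gcongr)

theorem norm_map_commutator_le (hf : IsCocycle π f) (g h : G) :
    ‖f (g * h * g⁻¹ * h⁻¹)‖ ≤ 2 * ‖f g‖ + 2 * ‖f h‖ := by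
  have h₁ := hf.norm_map_mul_le (g * h * g⁻¹) h⁻¹
  have h₂ := hf.norm_map_mul_le (g * h) g⁻¹
  have h₃ := hf.norm_map_mul_le g h
  rw [hf.norm_map_inv] at h₁ h₂
  linarith

theorem comp (hf : IsCocycle π f) (T : X →+ X) (hT : ∀ g v, T (π g v) = π g (T v)) :
    IsCocycle π (fun g => T (f g)) := by
  intro g h
  simp only [hf g h, map_add, hT]

end IsCocycle

namespace Heis

theorem C_eq : C = ⟨0, 0, 1⟩ := by
  ext <;> simp [C, A, B]

theorem C_mem_center : C ∈ Subgroup.center Heis :=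
  Subgroup.mem_center_iff.mpr fun g => by rw [C_eq]; ext <;> simp [add_comm]

theorem C_pow (n : ℕ) : C ^ n = ⟨0, 0, n⟩ := by
  induction n with
  | zero => rfl
  | succ n ih => rw [pow_succ, ih, C_eq]; ext <;> simp

theorem A_pow (n : ℕ) : A ^ n = ⟨n, 0, 0⟩ := by
  induction n with
  | zero => rfl
  | succ n ih => rw [pow_succ, ih]; ext <;> simp [A]

theorem B_pow (n : ℕ) : B ^ n = ⟨0, n, 0⟩ := by
  induction n with
  | zero => rfl
  | succ n ih => rw [pow_succ, ih]; ext <;> simp [B]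

theorem commutator_A_pow_B_pow (n : ℕ) :
    A ^ n * B ^ n * (A ^ n)⁻¹ * (B ^ n)⁻¹ = C ^ (n ^ 2) := by
  rw [A_pow, B_pow, C_pow]; ext <;> simp; ring

theorem dW_one_le_one_of_mem {g : Heis} (hg : g ∈ S) : dW g 1 ≤ 1 := by
  have hg' : g⁻¹ ∈ S := by
    simp only [S, Set.mem_insert_iff, Set.mem_singleton_iff] at hg ⊢
    rcases hg with rfl | rfl | rfl | rfl <;> simp
  rw [dW, mul_one]
  exact Nat.sInf_le ⟨[g⁻¹], rfl, by simpa using hg', by simp⟩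

end Heis

section Averaging

variable {X : Type*} [NormedAddCommGroup X] [NormedSpace ℝ X] (π : Heis →* (X ≃ₗᵢ[ℝ] X))

theorem Pop_add (n : ℕ) (v w : X) : Pop π n (v + w) = Pop π n v + Pop π n w := by
  simp only [Pop, map_add, sum_add_distrib, smul_add]

theorem Pop_apply_comm (n : ℕ) (g : Heis) (v : X) : Pop π n (π g v) = π g (Pop π n v) := by
  simp only [Pop, map_smul, map_sum, ← map_pow,
    apply_comm_of_mem_center π (Subgroup.pow_mem _ Heis.C_mem_center _)]

theorem norm_Pop_le (n : ℕ) (v : X) : ‖Pop π n v‖ ≤ ‖v‖ := by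
  calc ‖Pop π n v‖ ≤ ((2 : ℝ) ^ n)⁻¹ * ∑ j ∈ range (2 ^ n), ‖(π Heis.C ^ j) v‖ := by
        rw [Pop, norm_smul, Real.norm_of_nonneg (by positivity)]
        gcongr
        exact norm_sum_le _ _
    _ = ‖v‖ := by
        simp only [LinearIsometryEquiv.norm_map, sum_const, card_range, nsmul_eq_mul]
        push_cast
        rw [inv_mul_cancel_left₀ (by positivity)]

theorem Pop_add_eq_sum (s t : ℕ) (v : X) :
    Pop π (s + t) v =
      ((2 : ℝ) ^ t)⁻¹ • ∑ j ∈ range (2 ^ t), π (Heis.C ^ (j * 2 ^ s)) (Pop π s v) := by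
  have hblock : ∀ j, π (Heis.C ^ (j * 2 ^ s)) (Pop π s v) =
      ((2 : ℝ) ^ s)⁻¹ • ∑ r ∈ range (2 ^ s), (π Heis.C ^ (j * 2 ^ s + r)) v := by
    intro j
    simp only [Pop, map_smul, map_sum, map_pow, pow_add, LinearIsometryEquiv.coe_mul,
      Function.comp_apply]
  rw [sum_congr rfl fun j _ => hblock j, ← smul_sum, smul_smul, Pop, pow_add, pow_add,
    mul_comm ((2 : ℕ) ^ s), sum_range_mul, mul_inv, mul_comm]

end Averaging

section DiffOp

variable {X : Type*} [NormedAddCommGroup X] [NormedSpace ℝ X] (π : Heis →* (X ≃ₗᵢ[ℝ] X))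

noncomputable def diffOp (ℓ i j : ℕ) : X →+ X :=
  AddMonoidHom.mk'
    (fun v => π ((Heis.C ^ (j * 2 ^ (i * ℓ)))⁻¹) (Pop π ((i + 1) * ℓ) v) - Pop π (i * ℓ) v)
    fun v w => by simp only [Pop_add, map_add]; abel

theorem diffOp_apply (ℓ i j : ℕ) (v : X) :
    diffOp π ℓ i j v =
      π ((Heis.C ^ (j * 2 ^ (i * ℓ)))⁻¹) (Pop π ((i + 1) * ℓ) v) - Pop π (i * ℓ) v :=
  rfl

theorem diffOp_apply_comm (ℓ i j : ℕ) (g : Heis) (v : X) :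
    diffOp π ℓ i j (π g v) = π g (diffOp π ℓ i j v) := by
  simp only [diffOp_apply, Pop_apply_comm, map_sub,
    apply_comm_of_mem_center π (inv_mem (Subgroup.pow_mem _ Heis.C_mem_center _))]

variable {π} {p K : ℝ}

theorem PConvex.inv_two_pow_mul_sum_norm_diffOp_rpow_le (hX : PConvex X p K) (hp : 1 ≤ p)
    (hK : 0 < K) (ℓ i : ℕ) (v : X) :
    ((2 : ℝ) ^ ℓ)⁻¹ * ∑ j ∈ range (2 ^ ℓ), ‖diffOp π ℓ i j v‖ ^ p ≤
      (2 * K) ^ p / 2 * (‖Pop π (i * ℓ) v‖ ^ p - ‖Pop π ((i + 1) * ℓ) v‖ ^ p) := by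
  have hcard : (#(range (2 ^ ℓ)) : ℝ) = 2 ^ ℓ := by simp
  have hvar := hX.inv_card_mul_sum_norm_sub_rpow_le hp hK
    (nonempty_range_iff.mpr (pow_ne_zero _ two_ne_zero))
    (fun j => π (Heis.C ^ (j * 2 ^ (i * ℓ))) (Pop π (i * ℓ) v)) (w₀ := Pop π ((i + 1) * ℓ) v)
    (by rw [hcard, add_one_mul, Pop_add_eq_sum])
  simp only [norm_apply_sub_eq π _ _ (Pop π ((i + 1) * ℓ) v), ← diffOp_apply,
    LinearIsometryEquiv.norm_map, sum_const, card_range, nsmul_eq_mul] at hvar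
  push_cast at hvar
  rwa [inv_mul_cancel_left₀ (by positivity)] at hvar

theorem PConvex.sum_Ico_inv_two_pow_mul_sum_norm_diffOp_rpow_le (hX : PConvex X p K)
    (hp : 1 ≤ p) (hK : 0 < K) (ℓ : ℕ) {a b : ℕ} (hab : a ≤ b) (v : X) :
    ∑ i ∈ Ico a b, ((2 : ℝ) ^ ℓ)⁻¹ * ∑ j ∈ range (2 ^ ℓ), ‖diffOp π ℓ i j v‖ ^ p ≤
      (2 * K) ^ p / 2 * ‖v‖ ^ p := by
  have hPa : ‖Pop π (a * ℓ) v‖ ^ p ≤ ‖v‖ ^ p := by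
    gcongr
    exact norm_Pop_le π _ v
  calc ∑ i ∈ Ico a b, ((2 : ℝ) ^ ℓ)⁻¹ * ∑ j ∈ range (2 ^ ℓ), ‖diffOp π ℓ i j v‖ ^ p
      ≤ ∑ i ∈ Ico a b,
          (2 * K) ^ p / 2 * (‖Pop π (i * ℓ) v‖ ^ p - ‖Pop π ((i + 1) * ℓ) v‖ ^ p) :=
        sum_le_sum fun i _ => hX.inv_two_pow_mul_sum_norm_diffOp_rpow_le hp hK ℓ i v
    _ = (2 * K) ^ p / 2 * (‖Pop π (a * ℓ) v‖ ^ p - ‖Pop π (b * ℓ) v‖ ^ p) := by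
        have htel := sum_Ico_sub (fun i => ‖Pop π (i * ℓ) v‖ ^ p) hab
        rw [← mul_sum]
        congr 1
        rw [sum_sub_distrib] at htel ⊢
        simp only [add_one_mul] at htel ⊢
        linarith
    _ ≤ (2 * K) ^ p / 2 * ‖v‖ ^ p := by
        gcongr
        linarith [Real.rpow_nonneg (norm_nonneg (Pop π (b * ℓ) v)) p]

end DiffOp

section Pigeonhole

variable {X : Type*} [NormedAddCommGroup X] [NormedSpace ℝ X] {π : Heis →* (X ≃ₗᵢ[ℝ] X)}
  {p K : ℝ}

theorem PConvex.exists_norm_diffOp_le (hX : PConvex X p K) (hp : 1 ≤ p) (hK : 0 < K)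
    (ℓ k : ℕ) {m : ℕ} (hm : 0 < m) {u v : X} (hu : ‖u‖ ≤ 1) (hv : ‖v‖ ≤ 1) :
    ∃ i ∈ Ico (k + 1) (k + m + 1), ∃ j ∈ range (2 ^ ℓ),
      ‖diffOp π ℓ i j u‖ ≤ 2 * K / (m : ℝ) ^ (1 / p) ∧
        ‖diffOp π ℓ i j v‖ ≤ 2 * K / (m : ℝ) ^ (1 / p) := by
  set T := Ico (k + 1) (k + m + 1) ×ˢ range (2 ^ ℓ)
  have hT : T.Nonempty :=
    (nonempty_Ico.mpr (by omega)).product (nonempty_range_iff.mpr (pow_ne_zero _ two_ne_zero))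
  have htel (w : X) := hX.sum_Ico_inv_two_pow_mul_sum_norm_diffOp_rpow_le (π := π) hp hK ℓ
    (by omega : k + 1 ≤ k + m + 1) w
  have hu1 : ‖u‖ ^ p ≤ 1 := Real.rpow_le_one (norm_nonneg _) hu (by linarith)
  have hv1 : ‖v‖ ^ p ≤ 1 := Real.rpow_le_one (norm_nonneg _) hv (by linarith)
  have hsum : ∑ q ∈ T, (‖diffOp π ℓ q.1 q.2 u‖ ^ p + ‖diffOp π ℓ q.1 q.2 v‖ ^ p) ≤
      ∑ _q ∈ T, (2 * K) ^ p / m := by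
    calc ∑ q ∈ T, (‖diffOp π ℓ q.1 q.2 u‖ ^ p + ‖diffOp π ℓ q.1 q.2 v‖ ^ p)
        = 2 ^ ℓ * (∑ i ∈ Ico (k + 1) (k + m + 1),
              ((2 : ℝ) ^ ℓ)⁻¹ * ∑ j ∈ range (2 ^ ℓ), ‖diffOp π ℓ i j u‖ ^ p +
            ∑ i ∈ Ico (k + 1) (k + m + 1),
              ((2 : ℝ) ^ ℓ)⁻¹ * ∑ j ∈ range (2 ^ ℓ), ‖diffOp π ℓ i j v‖ ^ p) := by
          rw [sum_product, ← sum_add_distrib, mul_sum]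
          refine sum_congr rfl fun i _ => ?_
          rw [← mul_add, mul_inv_cancel_left₀ (by positivity), sum_add_distrib]
      _ ≤ 2 ^ ℓ * ((2 * K) ^ p / 2 * ‖u‖ ^ p + (2 * K) ^ p / 2 * ‖v‖ ^ p) := by
          gcongr
          exacts [htel u, htel v]
      _ ≤ 2 ^ ℓ * (2 * K) ^ p := by
          gcongr
          nlinarith [Real.rpow_pos_of_pos (by linarith : (0 : ℝ) < 2 * K) p]
      _ = ∑ _q ∈ T, (2 * K) ^ p / m := by
          rw [sum_const, card_product, card_range, Nat.card_Ico, Nat.add_sub_add_right,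
            Nat.add_sub_cancel_left, nsmul_eq_mul]
          push_cast
          field_simp
  obtain ⟨⟨i, j⟩, hij, hle⟩ := exists_le_of_sum_le hT hsum
  obtain ⟨hi, hj⟩ := mem_product.mp hij
  have hroot (w : X) (hw : ‖w‖ ^ p ≤ (2 * K) ^ p / m) : ‖w‖ ≤ 2 * K / (m : ℝ) ^ (1 / p) :=
    le_div_rpow_one_div_of_rpow_le (norm_nonneg w) (by linarith) (by exact_mod_cast hm)
      (by linarith) hw
  refine ⟨i, hi, j, hj, hroot _ ?_, hroot _ ?_⟩ <;>
    linarith [Real.rpow_nonneg (norm_nonneg (diffOp π ℓ i j u)) p,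
      Real.rpow_nonneg (norm_nonneg (diffOp π ℓ i j v)) p]

end Pigeonhole

theorem heisenberg_cocycle_consecutive_averages_general
    (X : Type*) [NormedAddCommGroup X] [NormedSpace ℝ X]
    (p K : ℝ) (hp : 2 ≤ p) (hK : 0 < K) (hX : PConvex X p K)
    (π : Heis →* (X ≃ₗᵢ[ℝ] X))
    (f : Heis → X) (hcocycle : ∀ g h : Heis, f (g * h) = π g (f h) + f g)
    (hLip : ∀ g h : Heis, ‖f g - f h‖ ≤ (Heis.dW g h : ℝ))
    (ℓ k m : ℕ) (hm : 1 ≤ m) :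
    ∃ i j : ℕ, k + 1 ≤ i ∧ i ≤ k + m ∧ j < 2 ^ ℓ ∧
      ∀ n : ℕ, 1 ≤ n →
        ‖π ((Heis.C ^ (j * 2 ^ (i * ℓ)))⁻¹) (Pop π ((i + 1) * ℓ) (f (Heis.C ^ (n ^ 2)))) -
            Pop π (i * ℓ) (f (Heis.C ^ (n ^ 2)))‖ ≤
          16 * K * (n : ℝ) / (m : ℝ) ^ (1 / p) := by
  have hf : IsCocycle π f := hcocycle
  have hgen {g : Heis} (hg : g ∈ Heis.S) : ‖f g‖ ≤ 1 := by
    have hdW : (Heis.dW g 1 : ℝ) ≤ 1 := by exact_mod_cast Heis.dW_one_le_one_of_mem hg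
    simpa only [hf.map_one, sub_zero] using (hLip g 1).trans hdW
  obtain ⟨i, hi, j, hj, hA, hB⟩ := hX.exists_norm_diffOp_le (π := π) (by linarith) hK ℓ k hm
    (hgen (g := Heis.A) (by simp only [Heis.S, Set.mem_insert_iff, true_or]))
    (hgen (g := Heis.B) (by simp only [Heis.S, Set.mem_insert_iff, true_or, or_true]))
  have hDf := hf.comp (diffOp π ℓ i j) (diffOp_apply_comm π ℓ i j)
  refine ⟨i, j, (mem_Ico.mp hi).1, by linarith [(mem_Ico.mp hi).2], mem_range.mp hj,
    fun n _ => ?_⟩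
  rw [← diffOp_apply, ← Heis.commutator_A_pow_B_pow]
  calc ‖diffOp π ℓ i j (f (Heis.A ^ n * Heis.B ^ n * (Heis.A ^ n)⁻¹ * (Heis.B ^ n)⁻¹))‖
      ≤ 2 * (n * ‖diffOp π ℓ i j (f Heis.A)‖) + 2 * (n * ‖diffOp π ℓ i j (f Heis.B)‖) := by
        refine (hDf.norm_map_commutator_le _ _).trans ?_
        gcongr <;> exact hDf.norm_map_pow_le _ n
    _ ≤ 2 * (n * (2 * K / (m : ℝ) ^ (1 / p))) + 2 * (n * (2 * K / (m : ℝ) ^ (1 / p))) := by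
        gcongr
    _ ≤ 16 * K * (n : ℝ) / (m : ℝ) ^ (1 / p) := by
        rw [← sub_nonneg]
        ring_nf
        positivity

/-- **Lemma 4.1.** Let `p ≥ 2`, `K > 0`, `(X, ‖·‖)` a `p`-convex Banach space with constant
`K`, `π` an action of `ℍ` on `X` by linear isometric automorphisms and `f : ℍ → X` a
`1`-Lipschitz `1`-cocycle. Then for all `ℓ, k, m ∈ ℕ` there are integers `i ∈ [k+1, k+m]`
and `j ∈ [0, 2^ℓ − 1]` such that for all `n ∈ ℕ`,
`‖π(c^{−j·2^{iℓ}}) P_{(i+1)ℓ} f(c^{n²}) − P_{iℓ} f(c^{n²})‖ ≤ 16·K·n/m^{1/p}`. -/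
theorem heisenberg_cocycle_consecutive_averages
    (X : Type*) [NormedAddCommGroup X] [NormedSpace ℝ X]
    (p K : ℝ) (hp : 2 ≤ p) (hK : 0 < K) (hX : PConvex X p K)
    (π : Heis →* (X ≃ₗᵢ[ℝ] X))
    (f : Heis → X) (hcocycle : ∀ g h : Heis, f (g * h) = π g (f h) + f g)
    (hLip : ∀ g h : Heis, ‖f g - f h‖ ≤ (Heis.dW g h : ℝ))
    (ℓ k m : ℕ) (hℓ : 1 ≤ ℓ) (hk : 1 ≤ k) (hm : 1 ≤ m) :
    ∃ i j : ℕ, k + 1 ≤ i ∧ i ≤ k + m ∧ j < 2 ^ ℓ ∧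
      ∀ n : ℕ, 1 ≤ n →
        ‖π ((Heis.C ^ (j * 2 ^ (i * ℓ)))⁻¹) (Pop π ((i + 1) * ℓ) (f (Heis.C ^ (n ^ 2)))) -
            Pop π (i * ℓ) (f (Heis.C ^ (n ^ 2)))‖ ≤
          16 * K * (n : ℝ) / (m : ℝ) ^ (1 / p) :=
  heisenberg_cocycle_consecutive_averages_general X p K hp hK hX π f hcocycle hLip ℓ k m hm
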